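/- Let A be an associative unital K-algebra equipped with a Manin system x of size 2. Then for every natural number a ≥ 1: x_{2,2}^a x_{1,1} = x_{1,1} x_{2,2}^a − (q − q^{−1}) [a]_q x_{2,1} x_{2,2}^{a−1} x_{1,2}. (The inductive base case established in the proof of Lemma 'fact'.) -/

import Mathlib

open scoped BigOperators

/-- The variable `q` in the field `K = ℚ(q)` of rational functions. -/
noncomputable def q : RatFunc ℚ := RatFunc.X

/-- The balanced quantum integer `[n]_q = (q^n − q^{−n})/(q − q⁻¹)`. -/
noncomputable def qint (n : ℤ) : RatFunc ℚ := (q ^ n - q ^ (-n)) / (q - q⁻¹)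

/-- The quantum factorial `[s]_q! = ∏_{i=1}^s [i]_q`. -/
noncomputable def qfact (s : ℕ) : RatFunc ℚ := ∏ i ∈ Finset.range s, qint ((i : ℤ) + 1)

/-- The balanced quantum binomial coefficient
`[m choose s]_q = ([m]_q [m−1]_q ⋯ [m−s+1]_q)/[s]_q!`. -/
noncomputable def qbinom (m : ℤ) (s : ℕ) : RatFunc ℚ :=
  (∏ i ∈ Finset.range s, qint (m - (i : ℤ))) / qfact s

/-- A *Manin system* of size `n` in an associative unital `ℚ(q)`-algebra `A`: a family
`x i j` satisfying the defining relations of Manin's quantized coordinate algebra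
`𝒪_q(n)` of `n × n` matrices. -/
structure IsManinSystem {A : Type*} [Ring A] [Algebra (RatFunc ℚ) A] {n : ℕ}
    (x : Fin n → Fin n → A) : Prop where
  comm : ∀ i j k l : Fin n, i < k → l < j → x i j * x k l = x k l * x i j
  main : ∀ i j k l : Fin n, k < i → l < j →
    x i j * x k l = x k l * x i j - (q - q⁻¹) • (x i l * x k j)
  row : ∀ i j l : Fin n, l < j → x i j * x i l = q⁻¹ • (x i l * x i j)
  col : ∀ i j k : Fin n, i < k → x i j * x k j = q • (x k j * x i j)

lemma hq0 : q ≠ 0 := RatFunc.X_ne_zero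

lemma hd0 : q - q⁻¹ ≠ 0 := by
  intro h
  have h1 : q = q⁻¹ := sub_eq_zero.mp h
  have h2 : q ^ 2 = 1 := by
    rw [sq]; nth_rewrite 1 [h1]; exact inv_mul_cancel₀ hq0
  have h3 : (Polynomial.X : Polynomial ℚ) ^ 2 = 1 := by
    apply RatFunc.algebraMap_injective ℚ
    simpa [q, RatFunc.algebraMap_X] using h2
  have := congrArg (Polynomial.eval 0) h3
  simp at this

lemma qint_one : qint 1 = 1 := by
  unfold qint
  rw [div_eq_one_iff_eq hd0]
  simp

lemma qint_succ (a : ℕ) : qint ((a : ℤ) + 1) = q ^ a + q⁻¹ * qint (a : ℤ) := by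
  unfold qint
  have h1 : q ^ ((a : ℤ) + 1) = q ^ a * q := by
    rw [zpow_add₀ hq0, zpow_natCast, zpow_one]
  have h2 : q ^ (-((a : ℤ) + 1)) = (q ^ a)⁻¹ * q⁻¹ := by
    rw [neg_add, zpow_add₀ hq0, zpow_neg, zpow_natCast, zpow_neg_one]
  have h3 : q ^ (-(a : ℤ)) = (q ^ a)⁻¹ := by rw [zpow_neg, zpow_natCast]
  rw [h1, h2, h3, zpow_natCast, div_eq_iff hd0, add_mul, mul_assoc,
    div_mul_cancel₀ _ hd0]
  ring

lemma comm_pow {A : Type*} [Ring A] [Algebra (RatFunc ℚ) A]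
    (x : Fin 2 → Fin 2 → A) (hx : IsManinSystem x) (m : ℕ) :
    x 0 1 * x 1 1 ^ m = (q ^ m) • (x 1 1 ^ m * x 0 1) := by
  induction m with
  | zero => simp
  | succ n ih =>
    have hc : x 0 1 * x 1 1 = q • (x 1 1 * x 0 1) := hx.col 0 1 1 (by decide)
    rw [pow_succ, ← mul_assoc, ih, smul_mul_assoc, mul_assoc, hc, mul_smul_comm,
      pow_succ, smul_smul, mul_assoc]

/-- The inductive base case in the proof of Lemma `fact`: for `a ≥ 1`,
`x_{2,2}^a x_{1,1} = x_{1,1} x_{2,2}^a − (q − q^{−1}) [a]_q x_{2,1} x_{2,2}^{a−1} x_{1,2}`.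
(Indices `1, 2` of the paper correspond to `0, 1 : Fin 2`.) -/
theorem fact_base {A : Type*} [Ring A] [Algebra (RatFunc ℚ) A]
    (x : Fin 2 → Fin 2 → A) (hx : IsManinSystem x) (a : ℕ) (ha : 1 ≤ a) :
    x 1 1 ^ a * x 0 0 =
      x 0 0 * x 1 1 ^ a - ((q - q⁻¹) * qint (a : ℤ)) • (x 1 0 * x 1 1 ^ (a - 1) * x 0 1) := by
  induction a, ha using Nat.le_induction with
  | base =>
    simpa [qint_one] using hx.main 1 1 0 0 (by decide) (by decide)
  | succ a ha ih =>
    have hmain : x 1 1 * x 0 0 = x 0 0 * x 1 1 - (q - q⁻¹) • (x 1 0 * x 0 1) :=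
      hx.main 1 1 0 0 (by decide) (by decide)
    have hrow : x 1 1 * x 1 0 = q⁻¹ • (x 1 0 * x 1 1) := hx.row 1 1 0 (by decide)
    have hsucc : (a + 1) - 1 = a := rfl
    have hsub : a - 1 + 1 = a := Nat.succ_pred_eq_of_pos ha
    -- main computation
    calc x 1 1 ^ (a + 1) * x 0 0
        = x 1 1 * (x 1 1 ^ a * x 0 0) := by rw [pow_succ', mul_assoc]
      _ = x 1 1 * (x 0 0 * x 1 1 ^ a)
          - ((q - q⁻¹) * qint (a : ℤ)) • (x 1 1 * (x 1 0 * x 1 1 ^ (a - 1) * x 0 1)) := by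
          rw [ih, mul_sub, mul_smul_comm]
      _ = (x 1 1 * x 0 0) * x 1 1 ^ a
          - ((q - q⁻¹) * qint (a : ℤ)) • (q⁻¹ • (x 1 0 * x 1 1 ^ a * x 0 1)) := by
          rw [← mul_assoc]
          congr 2
          rw [← mul_assoc, ← mul_assoc, hrow, smul_mul_assoc, smul_mul_assoc,
            mul_assoc (x 1 0), ← pow_succ', hsub]
      _ = x 0 0 * x 1 1 ^ (a + 1) - (q - q⁻¹) • (x 1 0 * (x 0 1 * x 1 1 ^ a))
          - ((q - q⁻¹) * qint (a : ℤ) * q⁻¹) • (x 1 0 * x 1 1 ^ a * x 0 1) := by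
          rw [hmain, sub_mul, smul_mul_assoc, pow_succ', ← mul_assoc, smul_smul, mul_assoc,
            mul_assoc (x 1 0)]
      _ = x 0 0 * x 1 1 ^ (a + 1)
          - ((q - q⁻¹) * (q ^ a + q⁻¹ * qint (a : ℤ))) • (x 1 0 * x 1 1 ^ a * x 0 1) := by
          rw [comm_pow x hx a, mul_smul_comm, ← mul_assoc, smul_smul, sub_sub, ← add_smul]
          ring_nf
      _ = x 0 0 * x 1 1 ^ (a + 1)
          - ((q - q⁻¹) * qint ((a : ℤ) + 1)) • (x 1 0 * x 1 1 ^ ((a + 1) - 1) * x 0 1) := by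
          rw [qint_succ, hsucc]
      _ = x 0 0 * x 1 1 ^ (a + 1)
          - ((q - q⁻¹) * qint ((a + 1 : ℕ) : ℤ)) • (x 1 0 * x 1 1 ^ ((a + 1) - 1) * x 0 1) := by
          norm_num
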